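/- If y satisfies the Thomas-Fermi equation y'' = y^{3/2}/√x on (0,∞) with y(0) = 1, y(∞) = 0, x·y'(x) → 0 as x → ∞, x²·y'(x) → 0 and x·y(x) → 0 as x → 0⁺ appropriately, and all integrals below converge, then ∫₀^∞ y(x) dx = (1/2) ∫₀^∞ x^{3/2} y(x)^{3/2} dx. -/

import Mathlib

open Real MeasureTheory Set Filter Topology

/-!
Since `(x² y' - 2 x y)' = x² y'' - 2 y = x^{3/2} y^{3/2} - 2 y`, the identity is the
fundamental theorem of calculus on `(0, ∞)` once `x² y' - 2 x y` vanishes at both ends.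
At `0` this is assumed. At `∞`, `y` is convex (`y'' ≥ 0`) and tends to `0`, hence decreasing
and nonnegative; integrability then gives `x y(x) ≤ 2 ∫_{x/2}^x y → 0`, and comparing `y'(x)`
with the secant slopes of `y` over `[x/2, x]` and `[x, 2x]` squeezes `x² y'(x)` between
multiples of `t y(t)` at `t = x/2, x, 2x`.
-/

lemma rpow_three_halves_nonneg (a : ℝ) : 0 ≤ a ^ ((3 : ℝ) / 2) := by
  rcases le_or_gt 0 a with ha | ha
  · exact rpow_nonneg ha _
  · -- for `a < 0`, `a ^ p = exp (log a * p) * cos (p * π)`, and `cos (3π/2) = 0`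
    have hcos : cos (3 / 2 * π) = 0 := by
      rw [show (3 : ℝ) / 2 * π = π / 2 + π by ring, cos_add_pi, cos_pi_div_two, neg_zero]
    rw [rpow_def_of_neg ha, hcos, mul_zero]

lemma rpow_three_halves_eq_sq_div_sqrt {x : ℝ} (hx : 0 < x) :
    x ^ ((3 : ℝ) / 2) = x ^ 2 / √x := by
  rw [sqrt_eq_rpow, ← rpow_natCast, ← rpow_sub hx]
  norm_num

lemma convexOn_Ioi_of_hasDerivAt2_nonneg {f f' f'' : ℝ → ℝ} {a : ℝ}
    (hf : ∀ x ∈ Ioi a, HasDerivAt f (f' x) x) (hf' : ∀ x ∈ Ioi a, HasDerivAt f' (f'' x) x)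
    (hf'' : ∀ x ∈ Ioi a, 0 ≤ f'' x) : ConvexOn ℝ (Ioi a) f := by
  refine convexOn_of_hasDerivWithinAt2_nonneg (f' := f') (f'' := f'') (convex_Ioi a)
    (fun x hx => (hf x hx).continuousAt.continuousWithinAt) ?_ ?_ ?_ <;> rw [interior_Ioi]
  · exact fun x hx => (hf x hx).hasDerivWithinAt
  · exact fun x hx => (hf' x hx).hasDerivWithinAt
  · exact hf''

lemma ConvexOn.antitoneOn_of_tendsto_atTop {f : ℝ → ℝ} {a L : ℝ}
    (hf : ConvexOn ℝ (Ioi a) f) (hlim : Tendsto f atTop (𝓝 L)) : AntitoneOn f (Ioi a) := by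
  intro x hx y hy hxy
  rcases hxy.eq_or_lt with rfl | hxy
  · rfl
  have hslope : Tendsto (fun z => (f z - f y) / (z - y)) atTop (𝓝 0) := by
    simpa [sub_eq_add_neg] using
      (hlim.sub_const (f y)).div_atTop (tendsto_atTop_add_const_right _ (-y) tendsto_id)
  have hle : (f y - f x) / (y - x) ≤ 0 :=
    ge_of_tendsto hslope <| (eventually_gt_atTop y).mono fun z hz =>
      hf.slope_mono_adjacent hx (hy.out.trans hz) hxy hz
  linarith [(div_le_iff₀ (sub_pos.mpr hxy)).mp hle]

lemma AntitoneOn.tendsto_self_mul_nhds_zero_of_integrableOn {f : ℝ → ℝ} {a : ℝ}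
    (hanti : AntitoneOn f (Ioi a)) (hnonneg : ∀ x ∈ Ioi a, 0 ≤ f x)
    (hint : IntegrableOn f (Ioi a)) : Tendsto (fun x => x * f x) atTop (𝓝 0) := by
  set F : ℝ → ℝ := fun b => ∫ t in a..b, f t
  have hF : Tendsto F atTop (𝓝 (∫ t in Ioi a, f t)) :=
    intervalIntegral_tendsto_integral_Ioi a hint tendsto_id
  have hhalf : Tendsto (fun x : ℝ => x / 2) atTop atTop := tendsto_id.atTop_div_const two_pos
  have hupper : Tendsto (fun x => 2 * (F x - F (x / 2))) atTop (𝓝 0) := by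
    simpa using (hF.sub (hF.comp hhalf)).const_mul 2
  have hintegrable : ∀ b c, a ≤ b → b ≤ c → IntervalIntegrable f volume b c :=
    fun b c hab hbc =>
      (intervalIntegrable_iff_integrableOn_Ioc_of_le hbc).mpr <|
        hint.mono_set <| Ioc_subset_Ioi_self.trans (Ioi_subset_Ioi hab)
  refine tendsto_of_tendsto_of_tendsto_of_le_of_le' tendsto_const_nhds hupper ?_ ?_
  all_goals
    filter_upwards [eventually_gt_atTop (2 * a), eventually_gt_atTop a, eventually_gt_atTop 0]
      with x h2a ha hx
  · exact mul_nonneg hx.le (hnonneg x ha)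
  · have hbound : ∫ _ in (x / 2)..x, f x ≤ ∫ t in (x / 2)..x, f t :=
      intervalIntegral.integral_mono_on (by linarith) intervalIntegrable_const
        (hintegrable _ _ (by linarith) (by linarith)) fun t ht =>
          hanti (show a < t by linarith [ht.1]) ha ht.2
    rw [intervalIntegral.integral_const, smul_eq_mul,
      ← intervalIntegral.integral_interval_sub_left (hintegrable _ _ le_rfl (by linarith))
        (hintegrable _ _ le_rfl (by linarith))] at hbound
    linarith

lemma ConvexOn.tendsto_sq_mul_deriv_of_tendsto_self_mul {f f' : ℝ → ℝ} {a : ℝ}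
    (hf : ConvexOn ℝ (Ioi a) f) (hderiv : ∀ x ∈ Ioi a, HasDerivAt f (f' x) x)
    (hlim : Tendsto (fun x => x * f x) atTop (𝓝 0)) :
    Tendsto (fun x => x ^ 2 * f' x) atTop (𝓝 0) := by
  have hlower : Tendsto (fun x => 2 * (x * f x) - 4 * (x / 2 * f (x / 2))) atTop (𝓝 0) := by
    simpa using (hlim.const_mul 2).sub
      ((hlim.comp (tendsto_id.atTop_div_const two_pos)).const_mul 4)
  have hupper : Tendsto (fun x => (2 * x * f (2 * x)) / 2 - x * f x) atTop (𝓝 0) := by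
    simpa using ((hlim.comp (tendsto_id.const_mul_atTop two_pos)).div_const 2).sub hlim
  refine tendsto_of_tendsto_of_tendsto_of_le_of_le' hlower hupper ?_ ?_
  all_goals
    filter_upwards [eventually_gt_atTop (2 * a), eventually_gt_atTop a, eventually_gt_atTop 0]
      with x h2a ha hx
  · have h := hf.slope_le_of_hasDerivAt (show a < x / 2 by linarith) ha
      (by linarith) (hderiv x ha)
    rw [slope_def_field, div_le_iff₀ (by linarith)] at h
    nlinarith
  · have h := hf.le_slope_of_hasDerivAt ha (show a < 2 * x by linarith)
      (by linarith) (hderiv x ha)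
    rw [slope_def_field, le_div_iff₀ (by linarith)] at h
    nlinarith

lemma integral_Ioi_of_hasDerivAt_of_tendsto_nhdsGT {f f' : ℝ → ℝ} {a l m : ℝ}
    (hderiv : ∀ x ∈ Ioi a, HasDerivAt f (f' x) x) (hint : IntegrableOn f' (Ioi a))
    (hleft : Tendsto f (𝓝[>] a) (𝓝 l)) (hright : Tendsto f atTop (𝓝 m)) :
    ∫ x in Ioi a, f' x = m - l := by
  classical
  -- redefining `f a := l` makes `f` continuous on `[a, ∞)`
  have hcont : ContinuousWithinAt (Function.update f a l) (Ici a) a := by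
    rwa [continuousWithinAt_update_same, Ici_sdiff_left]
  have hderiv' : ∀ x ∈ Ioi a, HasDerivAt (Function.update f a l) (f' x) x := fun x hx =>
    (hderiv x hx).congr_of_eventuallyEq <| (eventually_ne_nhds hx.out.ne').mono fun y hy =>
      Function.update_of_ne hy l f
  have hright' : Tendsto (Function.update f a l) atTop (𝓝 m) :=
    hright.congr' <| (eventually_ne_atTop a).mono fun x hx => (Function.update_of_ne hx l f).symm
  simpa using integral_Ioi_of_hasDerivAt_of_tendsto hcont hderiv' hint hright'

lemma hasDerivAt_sq_mul_deriv_sub_two_mul {y y' : ℝ → ℝ} {x b : ℝ}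
    (hy : HasDerivAt y (y' x) x) (hy' : HasDerivAt y' b x) :
    HasDerivAt (fun t => t ^ 2 * y' t - 2 * (t * y t)) (x ^ 2 * b - 2 * y x) x := by
  have h := ((hasDerivAt_pow 2 x).fun_mul hy').fun_sub
    (((hasDerivAt_id' x).fun_mul hy).const_mul 2)
  refine h.congr_deriv ?_
  ring

theorem thomas_fermi_integral_relation_general
    (y y' : ℝ → ℝ)
    (hy' : ∀ x ∈ Ioi (0 : ℝ), HasDerivAt y (y' x) x)
    (hy'' : ∀ x ∈ Ioi (0 : ℝ),
      HasDerivAt y' (y x ^ ((3 : ℝ) / 2) / Real.sqrt x) x)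
    (hytop : Tendsto y atTop (nhds 0))
    (hx2y'0 : Tendsto (fun x => x ^ 2 * y' x) (nhdsWithin 0 (Ioi 0)) (nhds 0))
    (hxy0 : Tendsto (fun x => x * y x) (nhdsWithin 0 (Ioi 0)) (nhds 0))
    (hint1 : IntegrableOn y (Ioi 0))
    (hint2 : IntegrableOn
      (fun x => x ^ ((3 : ℝ) / 2) * y x ^ ((3 : ℝ) / 2)) (Ioi 0)) :
    ∫ x in Ioi (0 : ℝ), y x =
      (1 / 2) * ∫ x in Ioi (0 : ℝ), x ^ ((3 : ℝ) / 2) * y x ^ ((3 : ℝ) / 2) := by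
  have hconv : ConvexOn ℝ (Ioi 0) y := convexOn_Ioi_of_hasDerivAt2_nonneg hy' hy'' fun x _ =>
    div_nonneg (rpow_three_halves_nonneg _) (sqrt_nonneg _)
  have hanti := hconv.antitoneOn_of_tendsto_atTop hytop
  have hnonneg : ∀ x ∈ Ioi (0 : ℝ), 0 ≤ y x := fun x hx =>
    le_of_tendsto hytop <| (eventually_gt_atTop x).mono fun b hb => hanti hx (hx.out.trans hb) hb.le
  have hxy_top := hanti.tendsto_self_mul_nhds_zero_of_integrableOn hnonneg hint1
  have hx2y'_top := hconv.tendsto_sq_mul_deriv_of_tendsto_self_mul hy' hxy_top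
  have hderiv : ∀ x ∈ Ioi (0 : ℝ), HasDerivAt (fun t => t ^ 2 * y' t - 2 * (t * y t))
      (x ^ ((3 : ℝ) / 2) * y x ^ ((3 : ℝ) / 2) - 2 * y x) x := fun x hx => by
    rw [rpow_three_halves_eq_sq_div_sqrt hx, div_mul_eq_mul_div, mul_div_assoc]
    exact hasDerivAt_sq_mul_deriv_sub_two_mul (hy' x hx) (hy'' x hx)
  have hibp := integral_Ioi_of_hasDerivAt_of_tendsto_nhdsGT hderiv
    (hint2.sub (hint1.const_mul 2)) (by simpa using hx2y'0.sub (hxy0.const_mul 2))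
    (by simpa using hx2y'_top.sub (hxy_top.const_mul 2))
  rw [integral_sub hint2 (hint1.const_mul 2), integral_const_mul] at hibp
  linarith

theorem thomas_fermi_integral_relation
    (y y' : ℝ → ℝ)
    (hy' : ∀ x ∈ Ioi (0 : ℝ), HasDerivAt y (y' x) x)
    (hy'' : ∀ x ∈ Ioi (0 : ℝ),
      HasDerivAt y' (y x ^ ((3 : ℝ) / 2) / Real.sqrt x) x)
    (hy0 : Tendsto y (nhdsWithin 0 (Ioi 0)) (nhds 1))
    (hytop : Tendsto y atTop (nhds 0))
    (hxy'top : Tendsto (fun x => x * y' x) atTop (nhds 0))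
    (hx2y'0 : Tendsto (fun x => x ^ 2 * y' x) (nhdsWithin 0 (Ioi 0)) (nhds 0))
    (hxy0 : Tendsto (fun x => x * y x) (nhdsWithin 0 (Ioi 0)) (nhds 0))
    (hint1 : IntegrableOn y (Ioi 0))
    (hint2 : IntegrableOn
      (fun x => x ^ ((3 : ℝ) / 2) * y x ^ ((3 : ℝ) / 2)) (Ioi 0)) :
    ∫ x in Ioi (0 : ℝ), y x =
      (1 / 2) * ∫ x in Ioi (0 : ℝ), x ^ ((3 : ℝ) / 2) * y x ^ ((3 : ℝ) / 2) :=
  thomas_fermi_integral_relation_general y y' hy' hy'' hytop hx2y'0 hxy0 hint1 hint2
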